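/- arXiv:1502.01452 — 3 statements merged into one kernel-verified Lean document; each statement's English description precedes it below -/
import Mathlib

section
/- Let σ be a permutation of {0,...,2n+1} with σ(0)=0, σ(2n+1)=2n+1, and σ^{-1}(k) < σ^{-1}(k+n) for all k in {1,...,n}. Define the FIFO property: for all distinct requests j, k in {1,...,n}, it is not the case that both σ^{-1}(k) < σ^{-1}(j) < σ^{-1}(k+n) and σ^{-1}(k) < σ^{-1}(j+n) < σ^{-1}(k+n) hold simultaneously. Then the FIFO property is equivalent to: for all distinct j, k, σ^{-1}(k) < σ^{-1}(j) implies σ^{-1}(k+n) < σ^{-1}(j+n). -/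
theorem stmt_5 (n : ℕ) (pos : ℕ → ℕ)
    (hbij : Set.BijOn pos (Set.Iic (2 * n + 1)) (Set.Iic (2 * n + 1)))
    (h0 : pos 0 = 0) (hend : pos (2 * n + 1) = 2 * n + 1)
    (hprec : ∀ k, 1 ≤ k → k ≤ n → pos k < pos (k + n)) :
    ((∀ j k, 1 ≤ j → j ≤ n → 1 ≤ k → k ≤ n → j ≠ k →
        ¬((pos k < pos j ∧ pos j < pos (k + n)) ∧
          (pos k < pos (j + n) ∧ pos (j + n) < pos (k + n))))
      ↔
      (∀ j k, 1 ≤ j → j ≤ n → 1 ≤ k → k ≤ n → j ≠ k →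
        pos k < pos j → pos (k + n) < pos (j + n))) := by
  constructor
  · intro hfifo j k hj1 hjn hk1 hkn hjk hkj
    have hne : pos (j + n) ≠ pos (k + n) := by
      intro h
      have : j + n = k + n := hbij.injOn
        (by simp only [Set.mem_Iic]; omega)
        (by simp only [Set.mem_Iic]; omega) h
      omega
    rcases lt_or_gt_of_ne hne with h | h
    · exfalso
      exact hfifo j k hj1 hjn hk1 hkn hjk
        ⟨⟨hkj, lt_trans (hprec j hj1 hjn) h⟩,
         ⟨lt_trans hkj (hprec j hj1 hjn), h⟩⟩
    · exact h
  · intro hmono j k hj1 hjn hk1 hkn hjk ⟨⟨h1, _⟩, ⟨_, h4⟩⟩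
    exact absurd (hmono j k hj1 hjn hk1 hkn hjk h1) (by omega)
end

section
/- Let σ be a Hamiltonian-path permutation of {0,...,2n+1} with σ(0)=0, σ(2n+1)=2n+1, and σ^{-1}(k) < σ^{-1}(k+n) for all requests k ∈ {1,...,n}, and let x_{uv} be the consecutive-pair arc indicators of σ. Then for all distinct requests i, j in {1,...,n}, the inequality x_{i+n,j} + x_{ji} + x_{i,i+n} + x_{j+n,i+n} + 2*x_{j,i+n} ≤ 2 holds. -/
theorem stmt_9 (n : ℕ) (pos : ℕ → ℕ)
    (hbij : Set.BijOn pos (Set.Iic (2 * n + 1)) (Set.Iic (2 * n + 1)))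
    (h0 : pos 0 = 0) (hend : pos (2 * n + 1) = 2 * n + 1)
    (hprec : ∀ k, 1 ≤ k → k ≤ n → pos k < pos (k + n))
    (x : ℕ → ℕ → ℕ)
    (hx : ∀ u v, x u v = if pos v = pos u + 1 then 1 else 0) :
    ∀ i j, 1 ≤ i → i ≤ n → 1 ≤ j → j ≤ n → i ≠ j →
      x (i + n) j + x j i + x i (i + n) + x (j + n) (i + n) + 2 * x j (i + n) ≤ 2 := by
  intro i j hi1 hin hj1 hjn hij
  have hn : 1 ≤ n := le_trans hi1 hin
  have inj : ∀ u v, u ≤ 2 * n + 1 → v ≤ 2 * n + 1 → pos u = pos v → u = v := by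
    intro u v hu hv h
    exact hbij.injOn (Set.mem_Iic.mpr hu) (Set.mem_Iic.mpr hv) h
  have hprec_i := hprec i hi1 hin
  -- a ∧ b impossible
  have k1 : ¬(pos j = pos (i + n) + 1 ∧ pos i = pos j + 1) := by
    rintro ⟨ha, hb⟩; omega
  -- c ∧ d impossible
  have k2 : ¬(pos (i + n) = pos i + 1 ∧ pos (i + n) = pos (j + n) + 1) := by
    rintro ⟨hc, hd⟩
    have : i = j + n := inj i (j + n) (by omega) (by omega) (by omega)
    omega
  -- e excludes everything
  have k3 : pos (i + n) = pos j + 1 →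
      pos j ≠ pos (i + n) + 1 ∧ pos i ≠ pos j + 1 ∧
      pos (i + n) ≠ pos i + 1 ∧ pos (i + n) ≠ pos (j + n) + 1 := by
    intro he
    refine ⟨by omega, ?_, ?_, ?_⟩
    · intro hb
      have : i = i + n := inj i (i + n) (by omega) (by omega) (by omega)
      omega
    · intro hc
      have : i = j := inj i j (by omega) (by omega) (by omega)
      omega
    · intro hd
      have : j = j + n := inj j (j + n) (by omega) (by omega) (by omega)
      omega
  rw [hx, hx, hx, hx, hx]
  split_ifs <;> omega
end

section
/- Let σ be a Hamiltonian-path permutation of {0,...,2n+1} with σ(0)=0, σ(2n+1)=2n+1, and σ^{-1}(k) < σ^{-1}(k+n) for all k, with arc indicators x_{uv}. Then for all distinct requests i, j, the inequality x_{i,i+n} + x_{i+n,j+n} + x_{j+n,i} + x_{ij} + 2*x_{i,j+n} ≤ 2 holds. -/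
theorem stmt_10 (n : ℕ) (pos : ℕ → ℕ)
    (hbij : Set.BijOn pos (Set.Iic (2 * n + 1)) (Set.Iic (2 * n + 1)))
    (h0 : pos 0 = 0) (hend : pos (2 * n + 1) = 2 * n + 1)
    (hprec : ∀ k, 1 ≤ k → k ≤ n → pos k < pos (k + n))
    (x : ℕ → ℕ → ℕ)
    (hx : ∀ u v, x u v = if pos v = pos u + 1 then 1 else 0) :
    ∀ i j, 1 ≤ i → i ≤ n → 1 ≤ j → j ≤ n → i ≠ j →
      x i (i + n) + x (i + n) (j + n) + x (j + n) i + x i j + 2 * x i (j + n) ≤ 2 := by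
  intro i j hi1 hi2 hj1 hj2 hij
  have inj := hbij.injOn
  have hmem : ∀ a : ℕ, a ≤ 2 * n + 1 → a ∈ Set.Iic (2 * n + 1) := fun a ha => ha
  have G1 : pos (i + n) ≠ pos j := fun h => by
    have := inj (hmem _ (by omega)) (hmem _ (by omega)) h; omega
  have G2 : pos (i + n) ≠ pos (j + n) := fun h => by
    have := inj (hmem _ (by omega)) (hmem _ (by omega)) h; omega
  have G3 : pos (i + n) ≠ pos i := fun h => by
    have := inj (hmem _ (by omega)) (hmem _ (by omega)) h; omega
  have hp1 := hprec i hi1 hi2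
  have hp2 := hprec j hj1 hj2
  simp only [hx]
  split_ifs <;> omega
end
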